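/- Suppose the number n of agents is odd, so that for every pair of distinct alternatives a strict majority of agents prefers one to the other. Let a* be a Copeland winner, i.e., an alternative maximizing |{b ∈ A : a strict majority of agents prefers a* to b}|, where agent i prefers a to b means d(x_i, a) < d(x_i, b). Then SC(a*) ≤ 5 · min_{b∈A} SC(b). -/

import Mathlib

/-!
A Copeland winner `w` is a king of the majority tournament: every other alternative `b` is
beaten by `w` either directly or through some `c` with `w ≻ c ≻ b`. A single majority step
costs a factor of at most `3`, because every agent of the majority `S` preferring `u` to `v`
witnesses `d(u, v) ≤ 2 d(xᵢ, v)`, which pays for the agents outside `S`. For two steps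
`u ≻ c ≻ v` split the agents into `S ∩ T`, `S \ T` and `Sᶜ`, where `S` and `T` are the
majorities behind the two steps; averaging the same triangle inequalities over these pieces,
with weights chosen according to the sizes of the pieces, gives the factor `5`.
-/

open Finset

theorem sum_le_sum_add_card_mul {ι R : Type*} [Semiring R] [PartialOrder R]
    [IsOrderedAddMonoid R] {s : Finset ι} {f g : ι → R} {δ : R}
    (h : ∀ i ∈ s, f i ≤ g i + δ) : ∑ i ∈ s, f i ≤ ∑ i ∈ s, g i + #s * δ := by
  simpa [sum_add_distrib] using sum_le_sum h

/-- The arithmetic behind two majority steps `u ≻ c ≻ v` backed by majorities `S` and `T`: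
`p`, `m`, `k` are the sizes of `S ∩ T`, `S \ T`, `Sᶜ`, `τ = #T`, the numbers `a`, `b`, `c` are
the total distances to `v` over these three pieces, `β = d(c, v)` and `γ = d(u, v)`. -/
theorem le_four_mul_of_two_majorities {p m k τ a b c β γ : ℝ} (hp : 0 ≤ p) (hm : 0 ≤ m)
    (hk : 0 ≤ k) (hS : k < p + m) (hT : p + m + k < 2 * τ) (ha : 0 ≤ a) (hb : 0 ≤ b)
    (hc : 0 ≤ c) (hTβ : τ * β ≤ 2 * (a + c)) (hMγ : m * γ ≤ 2 * b + m * β)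
    (hPγ : p * γ ≤ 2 * a) :
    m * β + k * γ ≤ 4 * (a + b + c) := by
  have hτ : 0 < τ := by linarith
  rcases le_or_gt k (2 * m) with hkm | hkm
  · rcases hm.eq_or_lt with rfl | hm
    · obtain rfl : k = 0 := by linarith
      linarith
    -- `hMγ` with weight `k / m`, then `hTβ` with weight `(m + k) / τ`
    have key : m * τ * (m * β + k * γ) ≤ m * τ * (4 * (a + b + c)) := by
      linarith [mul_le_mul_of_nonneg_left hMγ (by positivity : 0 ≤ τ * k),
        mul_le_mul_of_nonneg_left hTβ (by positivity : 0 ≤ m * (m + k)),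
        mul_nonneg (by linarith : 0 ≤ 2 * τ - m - k) (by positivity : 0 ≤ m * (a + c)),
        mul_nonneg (by linarith : 0 ≤ 2 * m - k) (by positivity : 0 ≤ τ * b)]
    exact le_of_mul_le_mul_left key (by positivity)
  · have hp : 0 < p := by linarith
    -- `hMγ` with weight `2`, `hPγ` with weight `(k - 2m) / p`, then `hTβ` with weight `3m / τ`
    have key : p * τ * (m * β + k * γ) ≤ p * τ * (4 * (a + b + c)) := by
      linarith [mul_le_mul_of_nonneg_left hMγ (by positivity : 0 ≤ 2 * p * τ),
        mul_le_mul_of_nonneg_left hPγ (mul_nonneg (by linarith : 0 ≤ k - 2 * m) hτ.le),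
        mul_le_mul_of_nonneg_left hTβ (by positivity : 0 ≤ 3 * m * p),
        mul_nonneg (by linarith : 0 ≤ 2 * τ - 3 * m) (by positivity : 0 ≤ p * c),
        mul_nonneg (by linarith : 0 ≤ p + m - k) (by positivity : 0 ≤ τ * a),
        mul_nonneg (by linarith : 0 ≤ 2 * τ - p - 3 * m) (by positivity : 0 ≤ a * (p + m)),
        mul_nonneg ha (sq_nonneg (p - m)), mul_nonneg ha (sq_nonneg m)]
    exact le_of_mul_le_mul_left key (by positivity)

theorem rel_or_exists_rel_rel_of_forall_card_filter_le {α : Type*} {R : α → α → Prop}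
    [DecidableRel R] {A : Finset α} (hirrefl : ∀ a, ¬ R a a)
    (htotal : ∀ a ∈ A, ∀ b ∈ A, a ≠ b → R a b ∨ R b a) {w b : α} (hw : w ∈ A)
    (hmax : ∀ a ∈ A, #{c ∈ A | R a c} ≤ #{c ∈ A | R w c}) (hb : b ∈ A) (hwb : w ≠ b) :
    R w b ∨ ∃ c ∈ A, R w c ∧ R c b := by
  by_contra! ⟨hnwb, hno⟩
  have hsub : {c ∈ A | R w c} ⊆ {c ∈ A | R b c} := by
    intro c hc
    rw [mem_filter] at hc ⊢
    have hcb : c ≠ b := by rintro rfl; exact hnwb hc.2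
    exact ⟨hc.1, (htotal c hc.1 b hb hcb).resolve_left (hno c hc.1 hc.2)⟩
  have hw_mem : w ∈ {c ∈ A | R b c} :=
    mem_filter.2 ⟨hw, (htotal w hw b hb hwb).resolve_left hnwb⟩
  have hssub : {c ∈ A | R w c} ⊂ {c ∈ A | R b c} :=
    (ssubset_iff_of_subset hsub).2 ⟨w, hw_mem, fun h => hirrefl w (mem_filter.1 h).2⟩
  exact (hmax b hb).not_gt (card_lt_card hssub)

section Metric

variable {ι X : Type*} [PseudoMetricSpace X]

theorem card_mul_dist_le (x : ι → X) {s : Finset ι} {a b : X} {δ : ℝ}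
    (h : ∀ i ∈ s, dist (x i) a ≤ dist (x i) b + δ) :
    #s * dist a b ≤ 2 * ∑ i ∈ s, dist (x i) b + #s * δ := by
  have := sum_le_sum_add_card_mul (f := fun _ => dist a b) (g := fun i => 2 * dist (x i) b)
    (δ := δ) fun i hi => by linarith [dist_triangle_left a b (x i), h i hi]
  simpa [mul_sum] using this

variable [Fintype ι]

def socialCost (x : ι → X) (a : X) : ℝ := ∑ i, dist (x i) a

def MajorityPrefers (x : ι → X) (a b : X) : Prop :=
  Fintype.card ι < 2 * #{i | dist (x i) a < dist (x i) b}

noncomputable instance (x : ι → X) : DecidableRel (MajorityPrefers x) :=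
  fun _ _ => Nat.decLt _ _

variable (x : ι → X)

theorem socialCost_nonneg (a : X) : 0 ≤ socialCost x a :=
  sum_nonneg fun _ _ => dist_nonneg

theorem not_majorityPrefers_self (a : X) : ¬ MajorityPrefers x a a := by
  simp [MajorityPrefers]

theorem majorityPrefers_or_majorityPrefers (hodd : Odd (Fintype.card ι)) {a b : X}
    (hab : ∀ i, dist (x i) a ≠ dist (x i) b) :
    MajorityPrefers x a b ∨ MajorityPrefers x b a := by
  have hflip : (univ.filter fun i => dist (x i) b < dist (x i) a) =
      univ.filter fun i => ¬ dist (x i) a < dist (x i) b :=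
    filter_congr fun i _ => by rw [not_lt, lt_iff_le_and_ne]; exact and_iff_left (hab i).symm
  have hcard := card_filter_add_card_filter_not (s := univ) fun i => dist (x i) a < dist (x i) b
  rw [card_univ, ← hflip] at hcard
  obtain ⟨r, hr⟩ := hodd
  unfold MajorityPrefers
  omega

theorem socialCost_le_three_mul_of_majorityPrefers {u v : X} (h : MajorityPrefers x u v) :
    socialCost x u ≤ 3 * socialCost x v := by
  classical
  unfold MajorityPrefers at h
  set S : Finset ι := {i | dist (x i) u < dist (x i) v}
  have hS : ∀ i ∈ S, dist (x i) u ≤ dist (x i) v + 0 := fun i hi => by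
    simpa using (mem_filter.1 hi).2.le
  have hSu := sum_le_sum_add_card_mul hS
  have hSuv := card_mul_dist_le x hS
  have hSc := sum_le_sum_add_card_mul (s := Sᶜ) fun i _ => dist_triangle_right (x i) u v
  have hcard : #Sᶜ ≤ #S := by
    have := card_add_card_compl S
    omega
  have hdist : (#Sᶜ : ℝ) * dist u v ≤ #S * dist u v := by gcongr
  have hSc_nonneg : 0 ≤ ∑ i ∈ Sᶜ, dist (x i) v := sum_nonneg fun _ _ => dist_nonneg
  simp only [socialCost, ← sum_add_sum_compl S]
  linarith

theorem socialCost_le_five_mul_of_majorityPrefers_of_majorityPrefers {u c v : X}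
    (huc : MajorityPrefers x u c) (hcv : MajorityPrefers x c v) :
    socialCost x u ≤ 5 * socialCost x v := by
  classical
  unfold MajorityPrefers at huc hcv
  set S : Finset ι := {i | dist (x i) u < dist (x i) c}
  set T : Finset ι := {i | dist (x i) c < dist (x i) v}
  set P := S ∩ T
  set M := S \ T
  have hP : ∀ i ∈ P, dist (x i) u ≤ dist (x i) v + 0 := fun i hi => by
    simp only [P, S, T, mem_inter, mem_filter, mem_univ, true_and] at hi
    linarith
  have hM : ∀ i ∈ M, dist (x i) u ≤ dist (x i) v + dist c v := fun i hi =>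
    (mem_filter.1 (mem_sdiff.1 hi).1).2.le.trans (dist_triangle_right _ _ _)
  have hC : ∀ i ∈ Sᶜ, dist (x i) u ≤ dist (x i) v + dist u v := fun i _ =>
    dist_triangle_right _ _ _
  have hT : ∀ i ∈ T, dist (x i) c ≤ dist (x i) v + 0 := fun i hi => by
    simpa using (mem_filter.1 hi).2.le
  have hT_sum :
      ∑ i ∈ T, dist (x i) v ≤ ∑ i ∈ P, dist (x i) v + ∑ i ∈ Sᶜ, dist (x i) v := by
    rw [← sum_inter_add_sum_sdiff T S, inter_comm]
    gcongr
    exact fun i hi => mem_compl.2 (mem_sdiff.1 hi).2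
  have hsplit : ∀ y, socialCost x y =
      ∑ i ∈ P, dist (x i) y + ∑ i ∈ M, dist (x i) y + ∑ i ∈ Sᶜ, dist (x i) y := by
    intro y
    rw [socialCost, ← sum_add_sum_compl S, ← sum_inter_add_sum_sdiff S T]
  have hTβ : #T * dist c v ≤ 2 * (∑ i ∈ P, dist (x i) v + ∑ i ∈ Sᶜ, dist (x i) v) := by
    linarith [card_mul_dist_le x hT]
  have hPγ : #P * dist u v ≤ 2 * ∑ i ∈ P, dist (x i) v := by
    linarith [card_mul_dist_le x hP]
  have hcardS : #P + #M = #S := card_inter_add_card_sdiff S T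
  have hcard := card_add_card_compl S
  have key := le_four_mul_of_two_majorities (Nat.cast_nonneg _) (Nat.cast_nonneg _)
    (Nat.cast_nonneg _) (by exact_mod_cast (by omega : #Sᶜ < #P + #M))
    (by exact_mod_cast (by omega : #P + #M + #Sᶜ < 2 * #T))
    (sum_nonneg fun _ _ => dist_nonneg) (sum_nonneg fun _ _ => dist_nonneg)
    (sum_nonneg fun _ _ => dist_nonneg) hTβ (card_mul_dist_le x hM) hPγ
  rw [hsplit, hsplit]
  linarith [sum_le_sum_add_card_mul hP, sum_le_sum_add_card_mul hM,
    sum_le_sum_add_card_mul hC]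

end Metric

theorem copeland_distortion_at_most_five_general
    {X : Type*} [PseudoMetricSpace X] (n : ℕ) (hodd : Odd n)
    (x : Fin n → X) (A : Finset X)
    (hdistinct : ∀ i : Fin n, ∀ a ∈ A, ∀ b ∈ A, a ≠ b → dist (x i) a ≠ dist (x i) b)
    (astar : X) (hastar : astar ∈ A)
    (hcope : ∀ a ∈ A,
      (A.filter (fun b =>
        n < 2 * (Finset.univ.filter
          (fun i : Fin n => dist (x i) a < dist (x i) b)).card)).card ≤
      (A.filter (fun b =>
        n < 2 * (Finset.univ.filter
          (fun i : Fin n => dist (x i) astar < dist (x i) b)).card)).card) :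
    ∀ b ∈ A, ∑ i, dist (x i) astar ≤ 5 * ∑ i, dist (x i) b := by
  intro b hb
  show socialCost x astar ≤ 5 * socialCost x b
  rcases eq_or_ne astar b with rfl | hne
  · linarith [socialCost_nonneg x astar]
  have htotal :
      ∀ a ∈ A, ∀ b ∈ A, a ≠ b → MajorityPrefers x a b ∨ MajorityPrefers x b a :=
    fun a ha b hb hab => majorityPrefers_or_majorityPrefers x (by simpa using hodd)
      fun i => hdistinct i a ha b hb hab
  have hmax : ∀ a ∈ A,
      #{c ∈ A | MajorityPrefers x a c} ≤ #{c ∈ A | MajorityPrefers x astar c} := by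
    simpa only [MajorityPrefers, Fintype.card_fin] using hcope
  rcases rel_or_exists_rel_rel_of_forall_card_filter_le (not_majorityPrefers_self x) htotal
    hastar hmax hb hne with hab | ⟨c, -, hac, hcb⟩
  · exact (socialCost_le_three_mul_of_majorityPrefers x hab).trans
      (by linarith [socialCost_nonneg x b])
  · exact socialCost_le_five_mul_of_majorityPrefers_of_majorityPrefers x hac hcb

/-- **The Copeland rule has distortion at most 5 in the metric setting.**
In a pseudometric space with an odd number `n` of agents located at `x i` and a finite
nonempty set `A` of alternatives such that no agent is equidistant from two distinct
alternatives, let `astar ∈ A` be a Copeland winner: it maximizes, over `a ∈ A`, the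
number of alternatives `b ∈ A` such that a strict majority of the agents is strictly
closer to `a` than to `b`. Then `SC(astar) ≤ 5 ⬝ SC(b)` for every `b ∈ A`, where
`SC(y) = ∑ i, dist (x i) y`. -/
theorem copeland_distortion_at_most_five
    {X : Type*} [PseudoMetricSpace X] (n : ℕ) (hodd : Odd n)
    (x : Fin n → X) (A : Finset X) (hA : A.Nonempty)
    (hdistinct : ∀ i : Fin n, ∀ a ∈ A, ∀ b ∈ A, a ≠ b → dist (x i) a ≠ dist (x i) b)
    (astar : X) (hastar : astar ∈ A)
    (hcope : ∀ a ∈ A,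
      (A.filter (fun b =>
        n < 2 * (Finset.univ.filter
          (fun i : Fin n => dist (x i) a < dist (x i) b)).card)).card ≤
      (A.filter (fun b =>
        n < 2 * (Finset.univ.filter
          (fun i : Fin n => dist (x i) astar < dist (x i) b)).card)).card) :
    ∀ b ∈ A, ∑ i, dist (x i) astar ≤ 5 * ∑ i, dist (x i) b :=
  copeland_distortion_at_most_five_general n hodd x A hdistinct astar hastar hcope
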